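/- Let E be an Archimedean vector lattice over ℝ and let n be a positive integer. Then for all f_1,...,f_n ∈ E, the identity ∑_{k=1}^n f_k = ∑_{k=1}^n M_k(f_1,...,f_n) holds. -/
import Mathlib


open Finset

/-- `Mk x k` is `M_{k+1}(x_1,...,x_n)` (`k : Fin n` represents the 1-indexed index `k+1`):
the supremum over all subsets `I` of `{1,...,n}` of cardinality `n + 1 - (k+1) = n - k` of
the infima `⋀_{i ∈ I} x i`. -/
def Mk {L : Type*} [Lattice L] {n : ℕ} (x : Fin n → L) (k : Fin n) : L :=
  ((univ : Finset (Fin n)).powersetCard (n - k.val)).attach.sup'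
    (attach_nonempty_iff.mpr (powersetCard_nonempty.mpr (by simp)))
    fun I => I.1.inf' (card_pos.mp (by
      have h := (mem_powersetCard.mp I.2).2
      have hk := k.isLt
      omega)) x


section Aux

attribute [local instance] AddCommGroup.toDistribLattice

variable {ι E : Type*} [DecidableEq ι] [Lattice E] [AddCommGroup E]
  [CovariantClass E E (· + ·) (· ≤ ·)]


private lemma sup'_set_congr {α β : Type*} [SemilatticeSup α] (f : β → α) {s t : Finset β}
    (h : s = t) (hs : s.Nonempty) (ht : t.Nonempty) : s.sup' hs f = t.sup' ht f := by
  subst h; rfl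

/-- the junk-valued infimum -/
noncomputable def ginf (x : ι → E) (I : Finset ι) : E :=
  if hI : I.Nonempty then I.inf' hI x else 0

lemma ginf_of_nonempty (x : ι → E) {I : Finset ι} (hI : I.Nonempty) :
    ginf x I = I.inf' hI x := dif_pos hI

/-- `Sfun x s k` = sup over subsets of `s` of card `k` of infima, junk `0` outside `1 ≤ k ≤ #s`. -/
noncomputable def Sfun (x : ι → E) (s : Finset ι) (k : ℕ) : E :=
  if h : k ≤ s.card ∧ 1 ≤ k then
    (s.powersetCard k).sup' (powersetCard_nonempty.mpr h.1) (ginf x)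
  else 0

lemma Sfun_eq (x : ι → E) {s : Finset ι} {k : ℕ} (h1 : 1 ≤ k) (h2 : k ≤ s.card) :
    Sfun x s k = (s.powersetCard k).sup' (powersetCard_nonempty.mpr h2) (ginf x) :=
  dif_pos ⟨h2, h1⟩

lemma Sfun_singleton (x : ι → E) (a : ι) : Sfun x {a} 1 = x a := by
  rw [Sfun_eq x le_rfl (by simp)]
  have : ({a} : Finset ι).powersetCard 1 = {{a}} := by
    rw [← card_singleton a, powersetCard_self]
  simp_rw [this, sup'_singleton, ginf_of_nonempty x (singleton_nonempty a), inf'_singleton]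

lemma Sfun_antitone (x : ι → E) {s : Finset ι} {k : ℕ} (h1 : 1 ≤ k) (h2 : k + 1 ≤ s.card) :
    Sfun x s (k + 1) ≤ Sfun x s k := by
  rw [Sfun_eq x (by omega) h2, Sfun_eq x h1 (by omega)]
  apply sup'_le
  intro I hI
  obtain ⟨hIs, hIc⟩ := mem_powersetCard.mp hI
  obtain ⟨J, hJI, hJc⟩ := exists_subset_card_eq (show k ≤ I.card by omega)
  have hJne : J.Nonempty := card_pos.mp (by omega)
  have hIne : I.Nonempty := card_pos.mp (by omega)
  rw [ginf_of_nonempty x hIne]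
  refine le_trans ?_ (le_sup' (ginf x) (mem_powersetCard.mpr ⟨hJI.trans hIs, hJc⟩))
  rw [ginf_of_nonempty x hJne]
  exact inf'_mono x hJI hJne

lemma sup'_image_insert (x : ι → E) {s : Finset ι} {a : ι} (ha : a ∉ s) {k : ℕ}
    (h1 : 1 ≤ k) (h2 : k ≤ s.card)
    (H : ((s.powersetCard k).image (insert a)).Nonempty) :
    ((s.powersetCard k).image (insert a)).sup' H (ginf x) = Sfun x s k ⊓ x a := by
  have hne : (s.powersetCard k).Nonempty := powersetCard_nonempty.mpr h2
  rw [sup'_image H]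
  have hcongr : ∀ I ∈ s.powersetCard k, (ginf x ∘ insert a) I = x a ⊓ ginf x I := by
    intro I hI
    obtain ⟨hIs, hIc⟩ := mem_powersetCard.mp hI
    have hIne : I.Nonempty := card_pos.mp (by omega)
    have haI : a ∉ I := fun h => ha (hIs h)
    simp only [Function.comp_apply]
    rw [ginf_of_nonempty x (insert_nonempty a I), ginf_of_nonempty x hIne, inf'_insert]
  rw [sup'_congr hne rfl hcongr, ← sup'_inf_distrib_left, Sfun_eq x h1 h2, inf_comm]

lemma Sfun_insert_one (x : ι → E) {s : Finset ι} {a : ι} (ha : a ∉ s) (hs : s.Nonempty) :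
    Sfun x (insert a s) 1 = Sfun x s 1 ⊔ x a := by
  have hc : 1 ≤ s.card := card_pos.mpr hs
  rw [Sfun_eq x le_rfl (by rw [card_insert_of_notMem ha]; omega), Sfun_eq x le_rfl hc]
  have hrec := powersetCard_succ_insert ha 0
  simp only [Nat.succ_eq_add_one, zero_add] at hrec
  rw [sup'_set_congr (ginf x) (by rw [hrec, powersetCard_zero, image_singleton]) _
    (by simp [Finset.Nonempty])]
  rw [sup'_union (powersetCard_nonempty.mpr hc) (singleton_nonempty _) (ginf x),
    sup'_singleton]
  congr 1

lemma Sfun_insert_top (x : ι → E) {s : Finset ι} {a : ι} (ha : a ∉ s) (hs : s.Nonempty) :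
    Sfun x (insert a s) (s.card + 1) = Sfun x s s.card ⊓ x a := by
  have hc : 1 ≤ s.card := card_pos.mpr hs
  rw [Sfun_eq x (by omega) (by rw [card_insert_of_notMem ha])]
  have hrec := powersetCard_succ_insert ha s.card
  have hempty : s.powersetCard (s.card + 1) = ∅ := by
    rw [powersetCard_eq_empty]; omega
  rw [Nat.succ_eq_add_one] at hrec
  have Hne : ((s.powersetCard s.card).image (insert a)).Nonempty := by
    simpa using powersetCard_nonempty.mpr (le_refl s.card)
  rw [sup'_set_congr (ginf x) (by rw [hrec, hempty, empty_union]) _ Hne]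
  exact sup'_image_insert x ha hc le_rfl Hne

lemma Sfun_insert_mid (x : ι → E) {s : Finset ι} {a : ι} (ha : a ∉ s) {k : ℕ}
    (h1 : 1 ≤ k) (h2 : k + 1 ≤ s.card) :
    Sfun x (insert a s) (k + 1) = Sfun x s (k + 1) ⊔ (Sfun x s k ⊓ x a) := by
  rw [Sfun_eq x (by omega) (by rw [card_insert_of_notMem ha]; omega)]
  have hrec := powersetCard_succ_insert ha k
  rw [Nat.succ_eq_add_one] at hrec
  have h1ne : (s.powersetCard (k + 1)).Nonempty := powersetCard_nonempty.mpr h2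
  have h2ne : ((s.powersetCard k).image (insert a)).Nonempty := by
    simpa using powersetCard_nonempty.mpr (show k ≤ s.card by omega)
  rw [sup'_set_congr (ginf x) hrec _ (by rw [← hrec]; exact powersetCard_nonempty.mpr (by rw [card_insert_of_notMem ha]; omega))]
  rw [sup'_union h1ne h2ne (ginf x)]
  rw [sup'_image_insert x ha h1 (by omega) h2ne, Sfun_eq x (by omega) h2]

end Aux

section Aux2

attribute [local instance] AddCommGroup.toDistribLattice

variable {ι E : Type*} [DecidableEq ι] [Lattice E] [AddCommGroup E]
  [CovariantClass E E (· + ·) (· ≤ ·)]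

lemma sum_Sfun (x : ι → E) {s : Finset ι} (hs : s.Nonempty) :
    ∑ k ∈ Finset.range s.card, Sfun x s (k + 1) = ∑ i ∈ s, x i := by
  induction hs using Finset.Nonempty.cons_induction with
  | singleton a => simp [Sfun_singleton]
  | cons a s ha hs ih =>
    rw [cons_eq_insert, card_insert_of_notMem ha, sum_insert ha, ← ih]
    have hm : 1 ≤ s.card := card_pos.mpr hs
    obtain ⟨m, hm'⟩ : ∃ m, s.card = m + 1 := ⟨s.card - 1, by omega⟩
    have key : ∀ j < s.card, Sfun x (insert a s) (j + 1) + (Sfun x s (j + 1) ⊓ x a)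
        = Sfun x s (j + 1) + (if j = 0 then x a else Sfun x s j ⊓ x a) := by
      intro j hj
      match j with
      | 0 =>
        rw [if_pos rfl, Sfun_insert_one x ha hs, add_comm, inf_add_sup]
      | k + 1 =>
        have hmono : Sfun x s (k + 2) ≤ Sfun x s (k + 1) :=
          Sfun_antitone x (by omega) (by omega)
        have hinf : Sfun x s (k + 2) ⊓ (Sfun x s (k + 1) ⊓ x a) = Sfun x s (k + 2) ⊓ x a := by
          rw [← inf_assoc, inf_eq_left.mpr hmono]
        rw [if_neg (Nat.succ_ne_zero k),
          show Sfun x (insert a s) (k + 1 + 1) = Sfun x s (k + 1 + 1) ⊔ (Sfun x s (k + 1) ⊓ x a)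
            from Sfun_insert_mid x ha (by omega) (by omega),
          show (k : ℕ) + 1 + 1 = k + 2 from rfl, ← hinf, add_comm, inf_add_sup]
    have keysum : ∑ k ∈ Finset.range s.card, Sfun x (insert a s) (k + 1)
          + ∑ k ∈ Finset.range s.card, (Sfun x s (k + 1) ⊓ x a)
        = ∑ k ∈ Finset.range s.card, Sfun x s (k + 1)
          + ∑ k ∈ Finset.range s.card, (if k = 0 then x a else Sfun x s k ⊓ x a) := by
      rw [← Finset.sum_add_distrib, ← Finset.sum_add_distrib]
      exact Finset.sum_congr rfl fun k hk => key k (Finset.mem_range.mp hk)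
    have hWsum : ∑ k ∈ Finset.range s.card, (if k = 0 then x a else Sfun x s k ⊓ x a)
        = ∑ k ∈ Finset.range m, (Sfun x s (k + 1) ⊓ x a) + x a := by
      rw [hm', Finset.sum_range_succ']
      simp
    have hUsum : ∑ k ∈ Finset.range s.card, (Sfun x s (k + 1) ⊓ x a)
        = ∑ k ∈ Finset.range m, (Sfun x s (k + 1) ⊓ x a) + (Sfun x s s.card ⊓ x a) := by
      rw [hm', Finset.sum_range_succ]
    rw [hUsum, hWsum] at keysum
    rw [Finset.sum_range_succ, Sfun_insert_top x ha hs]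
    set A := ∑ k ∈ Finset.range s.card, Sfun x (insert a s) (k + 1)
    set B := ∑ k ∈ Finset.range s.card, Sfun x s (k + 1)
    set D := ∑ k ∈ Finset.range m, (Sfun x s (k + 1) ⊓ x a)
    set u := Sfun x s s.card ⊓ x a
    have final : (A + u) + D = (x a + B) + D := by
      calc (A + u) + D = A + (D + u) := by abel
        _ = B + (D + x a) := keysum
        _ = (x a + B) + D := by abel
    exact add_right_cancel final

end Aux2

/-- In an Archimedean vector lattice `E` over `ℝ`, for all `f_1,...,f_n ∈ E` one has
`∑_{k=1}^n f_k = ∑_{k=1}^n M_k(f_1,...,f_n)`. -/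
theorem statement11 {E : Type*} [Lattice E] [AddCommGroup E] [Module ℝ E]
    [CovariantClass E E (· + ·) (· ≤ ·)] [PosSMulMono ℝ E]
    (harch : ∀ x y : E, (∀ m : ℕ, 0 < m → m • x ≤ y) → x ≤ 0)
    {n : ℕ} (hn : 0 < n) (f : Fin n → E) :
    ∑ k, f k = ∑ k, Mk f k := by
  have : Nonempty (Fin n) := ⟨⟨0, hn⟩⟩
  have hcard : (univ : Finset (Fin n)).card = n := by simp
  have hMk : ∀ k : Fin n, Mk f k = Sfun f univ (n - k.val) := by
    intro k
    have h1 : 1 ≤ n - k.val := by have := k.isLt; omega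
    have h2 : n - k.val ≤ (univ : Finset (Fin n)).card := by rw [hcard]; omega
    rw [Sfun_eq f h1 h2, Mk]
    apply le_antisymm
    · apply sup'_le
      intro I hI
      refine le_trans (le_of_eq ?_) (le_sup' (ginf f) I.2)
      exact (ginf_of_nonempty f _).symm
    · apply sup'_le
      intro I hI
      have hIne : I.Nonempty := card_pos.mp (by
        have h := (mem_powersetCard.mp hI).2; omega)
      refine le_trans (le_of_eq (ginf_of_nonempty f hIne)) ?_
      exact le_sup' (fun J : {J // J ∈ (univ : Finset (Fin n)).powersetCard (n - k.val)} =>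
        J.1.inf' (card_pos.mp (by
          have h := (mem_powersetCard.mp J.2).2
          have hk := k.isLt
          omega)) f) (mem_attach _ ⟨I, hI⟩)
  calc ∑ k, f k = ∑ k ∈ range (univ : Finset (Fin n)).card, Sfun f univ (k + 1) := by
        rw [sum_Sfun f univ_nonempty]
    _ = ∑ j ∈ range n, Sfun f univ (n - 1 - j + 1) := by
        rw [hcard, Finset.sum_range_reflect (fun k => Sfun f univ (k + 1)) n]
    _ = ∑ j ∈ range n, Sfun f univ (n - j) := by
        refine Finset.sum_congr rfl fun j hj => ?_
        have hj' := Finset.mem_range.mp hj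
        congr 1
        omega
    _ = ∑ k : Fin n, Sfun f univ (n - k.val) := (Fin.sum_univ_eq_sum_range _ n).symm
    _ = ∑ k, Mk f k := Finset.sum_congr rfl fun k _ => (hMk k).symm
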